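/- Let s = δ·t·n₁n₂n₃ and, for k ≥ 1, set a_k = ks/n₃, c_k = ks/n₂, b_k = ks/n₁. There exists a constant C (independent of k) such that for every integer k ≥ 1: (1) for every integer x with a_k ≤ x < c_k and x ≡ a_k (mod δ), writing x = a_k + t(n₃−n₂)·j + ℓ with integers j ≥ 0 and 0 ≤ ℓ < t(n₃−n₂), the number of factorizations of ks of length x satisfies f_{ks}(x) ≥ n₂n₃(j − C) + 1; (2) for every integer x with c_k < x ≤ b_k and x ≡ b_k (mod δ), writing x = b_k − t(n₂−n₁)·j − ℓ with integers j ≥ 0 and 0 ≤ ℓ < t(n₂−n₁), one has f_{ks}(x) ≥ n₁n₂(j − C) + 1. -/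

import Mathlib

/-- The (finite) set of factorizations of `n` in the numerical semigroup `⟨n₁, n₂, n₃⟩`:
triples `(a₁, a₂, a₃) ∈ ℕ³` with `a₁n₁ + a₂n₂ + a₃n₃ = n`.  (Each coordinate is at most `n`
whenever the generators are positive, so the bounding box `[0,n]³` captures all of them.) -/
def Zf (n₁ n₂ n₃ n : ℕ) : Finset (ℕ × ℕ × ℕ) :=
  (Finset.range (n + 1) ×ˢ Finset.range (n + 1) ×ˢ Finset.range (n + 1)).filter
    (fun a => a.1 * n₁ + a.2.1 * n₂ + a.2.2 * n₃ = n)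

/-- The length of a factorization. -/
def len (a : ℕ × ℕ × ℕ) : ℕ := a.1 + a.2.1 + a.2.2

/-- Membership in the numerical semigroup `⟨n₁, n₂, n₃⟩`. -/
def inS (n₁ n₂ n₃ n : ℕ) : Prop := ∃ a₁ a₂ a₃ : ℕ, a₁ * n₁ + a₂ * n₂ + a₃ * n₃ = n

/-- `fmul n₁ n₂ n₃ n ℓ` is the number of factorizations of `n` having length `ℓ`. -/
def fmul (n₁ n₂ n₃ n ℓ : ℕ) : ℕ := ((Zf n₁ n₂ n₃ n).filter (fun a => len a = ℓ)).card

/-- The mode frequency `ν(n)`: the maximum, over all lengths `ℓ ∈ ℕ`, of the number of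
factorizations of `n` of length `ℓ`. -/
noncomputable def modeFreq (n₁ n₂ n₃ n : ℕ) : ℕ := sSup (Set.range (fmul n₁ n₂ n₃ n))

/-- The set `γ(n)` of mode factorization lengths. -/
def modeSet (n₁ n₂ n₃ n : ℕ) : Set ℕ := {ℓ | fmul n₁ n₂ n₃ n ℓ = modeFreq n₁ n₂ n₃ n}

/-- The mean factorization length `μ(n)`. -/
def meanLen (n₁ n₂ n₃ n : ℕ) : ℚ :=
  (∑ z ∈ Zf n₁ n₂ n₃ n, (len z : ℚ)) / ((Zf n₁ n₂ n₃ n).card : ℚ)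

/-- The lengths of all factorizations of `n`, counted with multiplicity, in nondecreasing
order. -/
def sortedLengths (n₁ n₂ n₃ n : ℕ) : List ℕ :=
  Multiset.sort ((Zf n₁ n₂ n₃ n).val.map len) (· ≤ ·)

/-- The median factorization length `η(n)`: with the lengths listed with multiplicity in
nondecreasing order as `ℓ₁ ≤ ⋯ ≤ ℓ_M`, it is `ℓ_{(M+1)/2}` for odd `M` and
`(ℓ_{M/2} + ℓ_{M/2+1})/2` for even `M`. -/
def medianLen (n₁ n₂ n₃ n : ℕ) : ℚ :=
  let l := sortedLengths n₁ n₂ n₃ n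
  if l.length % 2 = 1 then (l.getD (l.length / 2) 0 : ℚ)
  else ((l.getD (l.length / 2 - 1) 0 : ℚ) + (l.getD (l.length / 2) 0 : ℚ)) / 2

/-!
Write `n₂ - n₁ = δ r`, `n₃ - n₂ = δ p` and `q = p + r`, so that `t = n₂ q`, `gcd(p, q) = 1` and
`p n₁ + r n₃ = q n₂`. Trading `q` copies of `n₂` for `p` copies of `n₁` and `r` copies of `n₃`
preserves value and length, so a factorization containing at least `N p` copies of `n₁` and `N r`
copies of `n₃` gives `N + 1` factorizations of the same length.

Near the minimal length `a_k` start from the factorization of `ks` using only `n₃`, and replace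
`α n₁` copies of `n₃` by `α n₃` copies of `n₁` and `β n₂` copies of `n₃` by `β n₃` copies of `n₂`.
This adds `δ (α q + β p)` to the length, and as `p, q` are coprime every large enough multiple of
`δ` is reached with `β < q`. For `x` in the `j`-th block of length `t (n₃ - n₂)` this leaves about
`n₂ n₃ j` trades of room, up to a loss that `C = q` absorbs. Near the maximal length `b_k` the same
argument runs from the factorization using only `n₁`, with the roles of `n₁` and `n₃` exchanged.
-/

theorem mem_Zf {n₁ n₂ n₃ n : ℕ} (h₁ : 0 < n₁) (h₂ : 0 < n₂) (h₃ : 0 < n₃) {a : ℕ × ℕ × ℕ} :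
    a ∈ Zf n₁ n₂ n₃ n ↔ a.1 * n₁ + a.2.1 * n₂ + a.2.2 * n₃ = n := by
  simp only [Zf, Finset.mem_filter, Finset.mem_product, Finset.mem_range, and_iff_right_iff_imp]
  intro h
  refine ⟨?_, ?_, ?_⟩ <;> nlinarith

theorem fmul_rev (n₁ n₂ n₃ n ℓ : ℕ) : fmul n₁ n₂ n₃ n ℓ = fmul n₃ n₂ n₁ n ℓ := by
  let rev : ℕ × ℕ × ℕ → ℕ × ℕ × ℕ := fun a => (a.2.2, a.2.1, a.1)
  refine Finset.card_bij' (fun a _ => rev a) (fun a _ => rev a) ?_ ?_ (fun _ _ => rfl)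
    (fun _ _ => rfl) <;>
  · rintro ⟨a₁, a₂, a₃⟩ h
    rw [Finset.mem_filter, Zf, Finset.mem_filter] at h ⊢
    simp only [Finset.mem_product, Finset.mem_range, len, rev] at h ⊢
    omega

theorem le_fmul_of_trade {n₁ n₂ n₃ p r n N A₁ A₂ A₃ : ℕ} (h₁ : 0 < n₁) (h₂ : 0 < n₂)
    (h₃ : 0 < n₃) (hq : 0 < p + r) (htrade : p * n₁ + r * n₃ = (p + r) * n₂)
    (hA : A₁ * n₁ + A₂ * n₂ + A₃ * n₃ = n) (hN₁ : N * p ≤ A₁) (hN₃ : N * r ≤ A₃) :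
    N + 1 ≤ fmul n₁ n₂ n₃ n (A₁ + A₂ + A₃) := by
  let trade : ℕ → ℕ × ℕ × ℕ := fun i => (A₁ - i * p, A₂ + i * (p + r), A₃ - i * r)
  have hmaps : ∀ i ∈ Finset.range (N + 1),
      trade i ∈ (Zf n₁ n₂ n₃ n).filter (fun a => len a = A₁ + A₂ + A₃) := by
    intro i hi
    have hi₁ : i * p ≤ A₁ := le_trans (Nat.mul_le_mul_right p (Finset.mem_range_succ_iff.mp hi)) hN₁
    have hi₃ : i * r ≤ A₃ := le_trans (Nat.mul_le_mul_right r (Finset.mem_range_succ_iff.mp hi)) hN₃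
    rw [Finset.mem_filter, mem_Zf h₁ h₂ h₃]
    simp only [len, trade]
    constructor
    · zify [hi₁, hi₃] at hA htrade ⊢
      linear_combination hA - (i : ℤ) * htrade
    · zify [hi₁, hi₃]
      ring
  have hinj : Set.InjOn trade (Finset.range (N + 1)) := fun i _ i' _ h =>
    Nat.eq_of_mul_eq_mul_right hq (Nat.add_left_cancel (congrArg (fun a => a.2.1) h))
  simpa [fmul] using Finset.card_le_card_of_injOn trade hmaps hinj

theorem exists_mul_add_mul_eq_of_coprime {p q n : ℕ} (hcop : Nat.Coprime p q) (hq : q ≠ 0)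
    (hn : p * q ≤ n) : ∃ α, ∃ β < q, α * q + p * β = n := by
  obtain ⟨β, hβ, hmod⟩ := Nat.exists_mul_mod_eq_of_coprime n hcop hq
  have hle : p * β ≤ n := le_trans (Nat.mul_le_mul_left p hβ.le) hn
  obtain ⟨α, hα⟩ := (Nat.modEq_iff_dvd' hle).mp hmod
  exact ⟨α, β, hβ, by rw [mul_comm, ← hα, Nat.sub_add_cancel hle]⟩

theorem dvd_of_add_add_modEq {δ a m ℓ : ℕ} (h : a + m + ℓ ≡ a [MOD δ]) (hm : δ ∣ m) : δ ∣ ℓ := by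
  have h' : a + (m + ℓ) ≡ a + 0 [MOD δ] := by simpa only [add_assoc, add_zero] using h
  exact (Nat.dvd_add_right hm).mp
    (Nat.modEq_zero_iff_dvd.mp (Nat.ModEq.add_left_cancel' a h'))

theorem trade_eq_of_sub_eq {v w u p r q : ℕ} {d : ℤ} (hq : q = p + r)
    (hvu : (u : ℤ) - v = d * q) (hwu : (u : ℤ) - w = d * p) : p * v + r * u = q * w := by
  subst hq
  zify
  push_cast at hvu
  linear_combination (-(p : ℤ)) * hvu + ((p : ℤ) + r) * hwu

/-- Both regimes of the theorem are instances, with `(v, w, u, d) = (n₁, n₂, n₃, δ)` near the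
minimal length and `(n₃, n₂, n₁, -δ)` near the maximal one: the factorization
`(α u, β u, K - α v - β w)` of `K u`, where `K = M w q v w`, has length `K + d (α q + β p)`. -/
theorem exists_tradable_factorization_of_length {v w u p r q M i ℓ x : ℕ} {d : ℤ} (hw : 0 < w)
    (hu : 0 < u) (hr : 0 < r) (hq : q = p + r) (hcop : Nat.Coprime p q)
    (hvu : (u : ℤ) - v = d * q) (hwu : (u : ℤ) - w = d * p) (hj : q + i < M * v)
    (hℓ : ℓ < w * q * p) (hx : (x : ℤ) = M * w * q * v * w + d * (w * q * p * (q + i) + ℓ)) :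
    ∃ A₁ A₂ A₃ : ℕ, A₁ * v + A₂ * w + A₃ * u = M * w * q * v * w * u ∧
      A₁ + A₂ + A₃ = x ∧ w * u * i * p ≤ A₁ ∧ w * u * i * r ≤ A₃ := by
  have hq0 : 0 < q := by omega
  have hwq : 0 < w * q := Nat.mul_pos hw hq0
  obtain ⟨α, β, hβ, hαβ⟩ := exists_mul_add_mul_eq_of_coprime hcop hq0.ne'
    (n := w * q * p * (q + i) + ℓ) (by nlinarith [Nat.le_mul_of_pos_right (p * q) hwq])
  have hK : (q + i + 1) * (w * (q * w)) ≤ M * w * q * v * w := by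
    rw [show M * w * q * v * w = M * v * (w * (q * w)) by ring]
    exact Nat.mul_le_mul_right _ hj
  have hα_lo : w * p * i ≤ α := by
    refine Nat.le_of_mul_le_mul_right ?_ hq0
    nlinarith [Nat.mul_le_mul_left p hβ.le, Nat.le_mul_of_pos_right (p * q) hwq]
  have hα_hi : α + 1 ≤ w * p * (q + i + 1) := by
    refine Nat.lt_of_mul_lt_mul_right (a := q) ?_
    nlinarith [Nat.zero_le (p * β)]
  have hroom : α * v + β * w + w * u * i * r ≤ M * w * q * v * w := by
    have hβw : β * w ≤ q * w * (r * u) :=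
      (Nat.mul_le_mul_right w hβ.le).trans (Nat.le_mul_of_pos_right _ (Nat.mul_pos hr hu))
    have := congrArg ((q + i + 1) * w * ·) (trade_eq_of_sub_eq hq hvu hwu)
    nlinarith [Nat.mul_le_mul_right v hα_hi]
  have hsub : α * v + β * w ≤ M * w * q * v * w := by omega
  refine ⟨α * u, β * u, M * w * q * v * w - (α * v + β * w), ?_, ?_,
    (Nat.mul_le_mul_right u hα_lo).trans_eq' (by ring), by omega⟩
  · zify [hsub]
    ring
  · zify [hsub] at hαβ ⊢
    rw [hx]
    linear_combination (α : ℤ) * hvu + (β : ℤ) * hwu + d * hαβ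

theorem le_fmul_of_near_pure {v w u p r q M j ℓ x : ℕ} {d : ℤ} (hv : 0 < v) (hw : 0 < w)
    (hu : 0 < u) (hr : 0 < r) (hq : q = p + r) (hcop : Nat.Coprime p q)
    (hvu : (u : ℤ) - v = d * q) (hwu : (u : ℤ) - w = d * p) (hj : j < M * v)
    (hℓ : ℓ < w * q * p) (hx : (x : ℤ) = M * w * q * v * w + d * (w * q * p * j + ℓ)) :
    (w * u : ℤ) * (j - q) + 1 ≤ fmul v w u (M * w * q * v * w * u) x := by
  rcases lt_or_ge j q with hjq | hjq
  · have h₁ : (1 : ℤ) ≤ w * u := by exact_mod_cast Nat.mul_pos hw hu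
    have h₂ : (j : ℤ) - q ≤ -1 := by omega
    have h₃ := (fmul v w u (M * w * q * v * w * u) x).cast_nonneg (α := ℤ)
    nlinarith
  obtain ⟨i, rfl⟩ := Nat.exists_eq_add_of_le hjq
  obtain ⟨A₁, A₂, A₃, hA, rfl, hA₁, hA₃⟩ :=
    exists_tradable_factorization_of_length hw hu hr hq hcop hvu hwu hj hℓ (by exact_mod_cast hx)
  have := le_fmul_of_trade hv hw hu (by omega) (hq ▸ trade_eq_of_sub_eq hq hvu hwu) hA hA₁ hA₃
  push_cast
  linarith

theorem le_fmul_of_near_min {n₁ n₂ n₃ δ t p r k x j ℓ : ℕ} (h₀ : 0 < n₁) (hr : 0 < r)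
    (hcop : Nat.Coprime r p) (hn₂ : n₂ = n₁ + δ * r) (hn₃ : n₃ = n₂ + δ * p)
    (ht : t = n₂ * (p + r)) (hxc : x < k * δ * t * n₁ * n₃)
    (hmod : x ≡ k * δ * t * n₁ * n₂ [MOD δ]) (hx : x = k * δ * t * n₁ * n₂ + t * (n₃ - n₂) * j + ℓ)
    (hℓ : ℓ < t * (n₃ - n₂)) :
    (n₂ * n₃ : ℤ) * ((j : ℤ) - ((p + r : ℕ) : ℤ)) + 1 ≤
      fmul n₁ n₂ n₃ (k * (δ * t * n₁ * n₂ * n₃)) x := by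
  have hgap : n₃ - n₂ = δ * p := by omega
  rw [hgap] at hx hℓ
  obtain ⟨ℓ', rfl⟩ : δ ∣ ℓ := dvd_of_add_add_modEq (hx ▸ hmod) ⟨t * p * j, by ring⟩
  subst ht
  have hj : j < k * δ * n₁ := by
    refine Nat.lt_of_mul_lt_mul_left (a := n₂ * (p + r) * (δ * p)) ?_
    have := congrArg (k * δ * (n₂ * (p + r)) * n₁ * ·) hn₃
    nlinarith
  have hℓ' : ℓ' < n₂ * (p + r) * p := by nlinarith
  have := le_fmul_of_near_pure (v := n₁) (w := n₂) (u := n₃) (d := δ) (x := x) h₀ (by omega)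
    (by omega) hr rfl (Nat.coprime_self_add_right.mpr hcop.symm) (by push_cast [hn₃, hn₂]; ring)
    (by push_cast [hn₃]; ring) hj hℓ' (by rw [hx]; push_cast; ring)
  convert this using 3
  ring

theorem le_fmul_of_near_max {n₁ n₂ n₃ δ t p r k x j ℓ : ℕ} (h₀ : 0 < n₁) (hp : 0 < p)
    (hcop : Nat.Coprime r p) (hn₂ : n₂ = n₁ + δ * r) (hn₃ : n₃ = n₂ + δ * p)
    (ht : t = n₂ * (p + r)) (hcx : k * δ * t * n₁ * n₃ < x)
    (hmod : x ≡ k * δ * t * n₂ * n₃ [MOD δ]) (hx : x + t * (n₂ - n₁) * j + ℓ = k * δ * t * n₂ * n₃)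
    (hℓ : ℓ < t * (n₂ - n₁)) :
    (n₁ * n₂ : ℤ) * ((j : ℤ) - ((p + r : ℕ) : ℤ)) + 1 ≤
      fmul n₁ n₂ n₃ (k * (δ * t * n₁ * n₂ * n₃)) x := by
  have hgap : n₂ - n₁ = δ * r := by omega
  rw [hgap] at hx hℓ
  obtain ⟨ℓ', rfl⟩ : δ ∣ ℓ := dvd_of_add_add_modEq (hx ▸ hmod.symm) ⟨t * r * j, by ring⟩
  subst ht
  have hj : j < k * δ * n₃ := by
    refine Nat.lt_of_mul_lt_mul_left (a := n₂ * (p + r) * (δ * r)) ?_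
    have := congrArg (k * δ * (n₂ * (p + r)) * n₃ * ·) hn₂
    nlinarith
  have hℓ' : ℓ' < n₂ * (p + r) * r := by nlinarith
  have := le_fmul_of_near_pure (v := n₃) (w := n₂) (u := n₁) (d := -δ) (x := x) (by omega)
    (by omega) h₀ hp (add_comm p r) (Nat.coprime_add_self_right.mpr hcop) (by push_cast [hn₃, hn₂]; ring)
    (by push_cast [hn₂]; ring) hj hℓ' (by zify at hx; push_cast; linear_combination hx)
  rw [fmul_rev]
  convert this using 3 <;> ring

theorem multiplicity_lower_bound_general (n₁ n₂ n₃ : ℕ) (h₀ : 0 < n₁) (h₁ : n₁ < n₂) (h₂ : n₂ < n₃)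
    (δ t : ℕ) (hδ : δ = Nat.gcd (n₂ - n₁) (n₃ - n₂)) (ht : t = n₂ * (n₃ - n₁) / δ)
    (s : ℕ) (hs : s = δ * t * n₁ * n₂ * n₃)
    (a c b : ℕ → ℕ) (ha : ∀ k, a k = k * δ * t * n₁ * n₂)
    (hc : ∀ k, c k = k * δ * t * n₁ * n₃) (hb : ∀ k, b k = k * δ * t * n₂ * n₃) :
    ∃ C : ℕ, ∀ k : ℕ, 1 ≤ k →
      (∀ x j ℓ : ℕ, a k ≤ x → x < c k → x ≡ a k [MOD δ] →
        x = a k + t * (n₃ - n₂) * j + ℓ → ℓ < t * (n₃ - n₂) →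
        ((n₂ : ℤ) * (n₃ : ℤ)) * ((j : ℤ) - (C : ℤ)) + 1 ≤ (fmul n₁ n₂ n₃ (k * s) x : ℤ)) ∧
      (∀ x j ℓ : ℕ, c k < x → x ≤ b k → x ≡ b k [MOD δ] →
        x + t * (n₂ - n₁) * j + ℓ = b k → ℓ < t * (n₂ - n₁) →
        ((n₁ : ℤ) * (n₂ : ℤ)) * ((j : ℤ) - (C : ℤ)) + 1 ≤ (fmul n₁ n₂ n₃ (k * s) x : ℤ)) := by
  obtain ⟨r, p, hcop, hr, hp⟩ := Nat.exists_coprime (n₂ - n₁) (n₃ - n₂)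
  rw [← hδ] at hr hp
  have hδ0 : 0 < δ := hδ ▸ Nat.gcd_pos_of_pos_left _ (Nat.sub_pos_of_lt h₁)
  have hn₂ : n₂ = n₁ + δ * r := by rw [mul_comm]; omega
  have hn₃ : n₃ = n₂ + δ * p := by rw [mul_comm]; omega
  have ht : t = n₂ * (p + r) := by
    rw [ht, show n₃ - n₁ = δ * (p + r) by rw [mul_add]; omega, mul_left_comm,
      Nat.mul_div_cancel_left _ hδ0]
  subst hs
  refine ⟨p + r, fun k _ => ⟨fun x j ℓ _ hxc hmod hx hℓ => ?_, fun x j ℓ hcx _ hmod hx hℓ => ?_⟩⟩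
  · rw [ha] at hmod hx
    rw [hc] at hxc
    exact le_fmul_of_near_min h₀ (Nat.pos_of_ne_zero (by rintro rfl; omega)) hcop hn₂ hn₃ ht hxc
      hmod hx hℓ
  · rw [hb] at hmod hx
    rw [hc] at hcx
    exact le_fmul_of_near_max h₀ (Nat.pos_of_ne_zero (by rintro rfl; omega)) hcop hn₂ hn₃ ht hcx
      hmod hx hℓ

/-- Lower bound on length multiplicities of ks: there is a constant C independent of k
such that, writing x = aₖ + t(n₃−n₂)j + ℓ (resp. x = bₖ − t(n₂−n₁)j − ℓ) with
0 ≤ ℓ < t(n₃−n₂) (resp. 0 ≤ ℓ < t(n₂−n₁)), one has f(x) ≥ n₂n₃(j−C)+1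
(resp. f(x) ≥ n₁n₂(j−C)+1). -/
theorem multiplicity_lower_bound (n₁ n₂ n₃ : ℕ) (h₀ : 0 < n₁) (h₁ : n₁ < n₂) (h₂ : n₂ < n₃)
    (hg : Nat.gcd n₁ (Nat.gcd n₂ n₃) = 1)
    (δ t : ℕ) (hδ : δ = Nat.gcd (n₂ - n₁) (n₃ - n₂)) (ht : t = n₂ * (n₃ - n₁) / δ)
    (s : ℕ) (hs : s = δ * t * n₁ * n₂ * n₃)
    (a c b : ℕ → ℕ) (ha : ∀ k, a k = k * δ * t * n₁ * n₂)
    (hc : ∀ k, c k = k * δ * t * n₁ * n₃) (hb : ∀ k, b k = k * δ * t * n₂ * n₃) :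
    ∃ C : ℕ, ∀ k : ℕ, 1 ≤ k →
      (∀ x j ℓ : ℕ, a k ≤ x → x < c k → x ≡ a k [MOD δ] →
        x = a k + t * (n₃ - n₂) * j + ℓ → ℓ < t * (n₃ - n₂) →
        ((n₂ : ℤ) * (n₃ : ℤ)) * ((j : ℤ) - (C : ℤ)) + 1 ≤ (fmul n₁ n₂ n₃ (k * s) x : ℤ)) ∧
      (∀ x j ℓ : ℕ, c k < x → x ≤ b k → x ≡ b k [MOD δ] →
        x + t * (n₂ - n₁) * j + ℓ = b k → ℓ < t * (n₂ - n₁) →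
        ((n₁ : ℤ) * (n₂ : ℤ)) * ((j : ℤ) - (C : ℤ)) + 1 ≤ (fmul n₁ n₂ n₃ (k * s) x : ℤ)) :=
  multiplicity_lower_bound_general n₁ n₂ n₃ h₀ h₁ h₂ δ t hδ ht s hs a c b ha hc hb
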